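/- arXiv:2304.13972 — 4 statements merged into one kernel-verified Lean document; each statement's English description precedes it below -/
import Mathlib

section
/- Let f: ℝ^d → ℝ be twice continuously differentiable with ‖∇²f(z)‖ ≤ L₀ + L_ρ ‖∇f(z)‖^ρ for all z, where ρ, L₀, L_ρ ≥ 0. For any a > 0 and points x, y with ‖y − x‖ ≤ a / (L₀ + L_ρ (‖∇f(x)‖ + a)^ρ), one has ‖∇f(y)‖ ≤ ‖∇f(x)‖ + a. -/
/-!
Write `C = ‖∇f x‖ + a` and `L = L₀ + L_ρ C^ρ`. As long as `‖∇f‖ ≤ C`, the Hessian is bounded by `L`,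
so along the segment from `x` to `y` the gradient moves by at most `L ‖y - x‖ ≤ a`, which keeps
`‖∇f‖ ≤ C`. A first-exit argument makes this bootstrap rigorous: at the first time the gradient
norm reaches `C`, the mean value inequality on the part of the segment before it shows that
this time can only be the endpoint.
-/

open Set InnerProductSpace

theorem norm_image_sub_le_of_norm_deriv_right_le_while_norm_le {E : Type*}
    [NormedAddCommGroup E] [NormedSpace ℝ E] {h h' : ℝ → E} {a b R B : ℝ} (hab : a ≤ b)
    (hcont : ContinuousOn h (Icc a b))
    (hderiv : ∀ t ∈ Ico a b, HasDerivWithinAt h (h' t) (Ici t) t)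
    (bound : ∀ t ∈ Ico a b, ‖h t‖ ≤ R → ‖h' t‖ ≤ B)
    (h_start : ‖h a‖ < R) (h_budget : ‖h a‖ + B * (b - a) ≤ R) :
    ‖h b - h a‖ ≤ B * (b - a) := by
  have below : ∀ t ∈ Ico a b, ‖h t‖ < R := by
    by_contra! hexit
    obtain ⟨t₀, ht₀, hRt₀⟩ := hexit
    have hK : IsCompact (Icc a b ∩ (fun t => ‖h t‖) ⁻¹' Ici R) :=
      isCompact_Icc.of_isClosed_subset
        (hcont.norm.preimage_isClosed_of_isClosed isClosed_Icc isClosed_Ici) inter_subset_left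
    obtain ⟨τ, ⟨hτ, hRτ⟩, hτ_least⟩ := hK.exists_isLeast ⟨t₀, Ico_subset_Icc_self ht₀, hRt₀⟩
    have hτb : τ < b := (hτ_least ⟨Ico_subset_Icc_self ht₀, hRt₀⟩).trans_lt ht₀.2
    have hB : 0 ≤ B := (norm_nonneg _).trans (bound a ⟨le_rfl, hτ.1.trans_lt hτb⟩ h_start.le)
    have before_τ : ∀ t ∈ Ico a τ, ‖h t‖ ≤ R := fun t ht =>
      (not_le.1 fun hRt => ht.2.not_ge (hτ_least ⟨⟨ht.1, ht.2.le.trans hτ.2⟩, hRt⟩)).le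
    have hmvt : ‖h τ - h a‖ ≤ B * (τ - a) :=
      norm_image_sub_le_of_norm_deriv_right_le_segment (hcont.mono (Icc_subset_Icc_right hτb.le))
        (fun t ht => hderiv t ⟨ht.1, ht.2.trans hτb⟩)
        (fun t ht => bound t ⟨ht.1, ht.2.trans hτb⟩ (before_τ t ht)) τ ⟨hτ.1, le_rfl⟩
    have hτ_short : ‖h a‖ + B * (τ - a) < R := by
      rcases hB.eq_or_lt with rfl | hBpos
      · simpa using h_start
      · nlinarith [mul_lt_mul_of_pos_left hτb hBpos]
    have : R ≤ ‖h τ‖ := hRτ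
    linarith [norm_le_insert' (h τ) (h a)]
  exact norm_image_sub_le_of_norm_deriv_right_le_segment hcont hderiv
    (fun t ht => bound t ht (below t ht).le) b ⟨hab, le_rfl⟩

theorem norm_image_sub_le_of_norm_fderiv_le_while_norm_le {E F : Type*}
    [NormedAddCommGroup E] [NormedSpace ℝ E] [NormedAddCommGroup F] [NormedSpace ℝ F]
    {G : E → F} {R M : ℝ} (hG : Differentiable ℝ G)
    (bound : ∀ z, ‖G z‖ ≤ R → ‖fderiv ℝ G z‖ ≤ M) {x y : E}
    (h_start : ‖G x‖ < R) (h_budget : ‖G x‖ + M * ‖y - x‖ ≤ R) :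
    ‖G y - G x‖ ≤ M * ‖y - x‖ := by
  have hγ : ∀ t : ℝ, HasDerivAt (fun t : ℝ => x + t • (y - x)) (y - x) t := fun t => by
    simpa using ((hasDerivAt_id t).smul_const (y - x)).const_add x
  have hderiv : ∀ t : ℝ, HasDerivAt (fun t : ℝ => G (x + t • (y - x)))
      (fderiv ℝ G (x + t • (y - x)) (y - x)) t := fun t =>
    (hG _).hasFDerivAt.comp_hasDerivAt t (hγ t)
  have := norm_image_sub_le_of_norm_deriv_right_le_while_norm_le zero_le_one
    (fun t _ => (hderiv t).continuousAt.continuousWithinAt)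
    (fun t _ => (hderiv t).hasDerivWithinAt)
    (fun t _ ht => ((fderiv ℝ G _).le_opNorm _).trans
      (mul_le_mul_of_nonneg_right (bound _ ht) (norm_nonneg _)))
    (by simpa using h_start) (by simpa using h_budget)
  simpa using this

theorem ContDiff.differentiable_gradient {F : Type*} [NormedAddCommGroup F]
    [InnerProductSpace ℝ F] [CompleteSpace F] {f : F → ℝ} (hf : ContDiff ℝ 2 f) :
    Differentiable ℝ (gradient f) := fun z =>
  (toDual ℝ F).symm.differentiable.differentiableAt.comp z
    ((hf.fderiv_right (m := 1) (by norm_num)).differentiable one_ne_zero z)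

theorem grad_norm_local_bound_general (d : ℕ) (f : EuclideanSpace ℝ (Fin d) → ℝ)
    (ρ L₀ Lρ : ℝ) (hρ : 0 ≤ ρ) (hLρ : 0 ≤ Lρ)
    (hf : ContDiff ℝ 2 f)
    (hhess : ∀ z, ‖fderiv ℝ (gradient f) z‖ ≤ L₀ + Lρ * ‖gradient f z‖ ^ ρ)
    (a : ℝ) (ha : 0 < a) (x y : EuclideanSpace ℝ (Fin d))
    (hxy : ‖y - x‖ ≤ a / (L₀ + Lρ * (‖gradient f x‖ + a) ^ ρ)) :
    ‖gradient f y‖ ≤ ‖gradient f x‖ + a := by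
  set C := ‖gradient f x‖ + a
  set L := L₀ + Lρ * C ^ ρ
  have hstep : L * ‖y - x‖ ≤ a := by
    rcases le_or_gt L 0 with hL | hL
    · nlinarith [norm_nonneg (y - x)]
    · rwa [mul_comm, ← le_div_iff₀ hL]
  have hbound : ∀ z, ‖gradient f z‖ ≤ C → ‖fderiv ℝ (gradient f) z‖ ≤ L := fun z hz =>
    (hhess z).trans <| add_le_add_right
      (mul_le_mul_of_nonneg_left (Real.rpow_le_rpow (norm_nonneg _) hz hρ) hLρ) L₀
  have := norm_image_sub_le_of_norm_fderiv_le_while_norm_le hf.differentiable_gradient hbound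
    (by linarith : ‖gradient f x‖ < C) (by linarith)
  linarith [norm_le_insert' (gradient f y) (gradient f x)]

/-- Under the `(L₀, L_ρ)` generalized smoothness condition, the gradient norm
increases by at most `a` within radius `a / (L₀ + L_ρ (‖∇f x‖ + a)^ρ)`. -/
theorem grad_norm_local_bound (d : ℕ) (f : EuclideanSpace ℝ (Fin d) → ℝ)
    (ρ L₀ Lρ : ℝ) (hρ : 0 ≤ ρ) (hL₀ : 0 ≤ L₀) (hLρ : 0 ≤ Lρ)
    (hf : ContDiff ℝ 2 f)
    (hhess : ∀ z, ‖fderiv ℝ (gradient f) z‖ ≤ L₀ + Lρ * ‖gradient f z‖ ^ ρ)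
    (a : ℝ) (ha : 0 < a) (x y : EuclideanSpace ℝ (Fin d))
    (hxy : ‖y - x‖ ≤ a / (L₀ + Lρ * (‖gradient f x‖ + a) ^ ρ)) :
    ‖gradient f y‖ ≤ ‖gradient f x‖ + a :=
  grad_norm_local_bound_general d f ρ L₀ Lρ hρ hLρ hf hhess a ha x y hxy
end

section
/- Let f: ℝ^d → ℝ be twice continuously differentiable with ‖∇²f(z)‖ ≤ L₀ + L_ρ ‖∇f(z)‖^ρ for all z, where ρ, L₀, L_ρ ≥ 0. For any a > 0 and points x, y with ‖y − x‖ ≤ a / (L₀ + L_ρ (‖∇f(x)‖ + a)^ρ), one has ‖∇f(y) − ∇f(x)‖ ≤ (L₀ + L_ρ (‖∇f(x)‖ + a)^ρ) · ‖y − x‖. -/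
/-!
Along the segment from `x` to `y` the Hessian bound `L₀ + Lρ ‖∇f‖ ^ ρ` is at most
`L = L₀ + Lρ (‖∇f x‖ + a) ^ ρ` as long as `∇f` stays within `a` of `∇f x`, and while this bound
holds the mean value inequality keeps `∇f` within `L ‖y - x‖ ≤ a` of `∇f x`. A fencing argument
along the segment turns this circular reasoning into a proof; it needs room to spare, so it is
run on the shorter segments `[x, x + s (y - x)]`, `s < 1`, and the estimate passes to `s = 1` by
continuity.
-/

open Set AffineMap Filter Topology InnerProductSpace

theorem ContDiff.gradient {F : Type*} [NormedAddCommGroup F] [InnerProductSpace ℝ F]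
    [CompleteSpace F] {f : F → ℝ} {m n : WithTop ℕ∞} (hf : ContDiff ℝ n f) (hmn : m + 1 ≤ n) :
    ContDiff ℝ m (gradient f) :=
  (toDual ℝ F).symm.contDiff.comp (hf.fderiv_right hmn)

section Bootstrap

variable {E F : Type*} [NormedAddCommGroup E] [NormedSpace ℝ E] [NormedAddCommGroup F]
  [NormedSpace ℝ F] {G : E → F} {G' : E → E →L[ℝ] F} {x y : E} {M r : ℝ}

/-- Fencing `‖G (lineMap x y t) - G x‖` by `K t` with `M ‖y - x‖ < K ≤ r`: at a touching point
`G` is within `r` of `G x`, so the derivative bound applies there. -/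
theorem norm_image_sub_le_of_hasFDerivAt_bootstrap_of_lt
    (hG : ∀ z ∈ segment ℝ x y, HasFDerivAt G (G' z) z)
    (hbound : ∀ z ∈ segment ℝ x y, ‖G z - G x‖ ≤ r → ‖G' z‖ ≤ M)
    (hr₀ : 0 ≤ r) (hr : M * ‖y - x‖ < r) : ‖G y - G x‖ ≤ M * ‖y - x‖ := by
  set φ : ℝ → F := fun t => G (lineMap x y t) - G x
  have hφ : ∀ t ∈ Icc (0 : ℝ) 1, HasDerivAt φ (G' (lineMap x y t) (y - x)) t := fun t ht =>
    ((hG _ (lineMap_mem_segment ℝ x y ht)).comp_hasDerivAt t hasDerivAt_lineMap).sub_const (G x)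
  refine le_of_forall_gt_imp_ge_of_dense fun K hK => ?_
  suffices hfence : ‖φ 1‖ ≤ min K r * 1 by
    simpa [φ] using hfence.trans (by simp)
  refine image_norm_le_of_norm_deriv_right_lt_deriv_boundary
    (fun t ht => (hφ t ht).continuousAt.continuousWithinAt)
    (fun t ht => (hφ t (Ico_subset_Icc_self ht)).hasDerivWithinAt) (by simp [φ])
    (fun t => by simpa using (hasDerivAt_id t).const_mul (min K r)) ?_ ⟨zero_le_one, le_rfl⟩
  intro t ht htouch
  have hM : ‖G' (lineMap x y t)‖ ≤ M := by
    refine hbound _ (lineMap_mem_segment ℝ x y (Ico_subset_Icc_self ht)) ?_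
    change ‖φ t‖ ≤ r
    rw [htouch]
    nlinarith [ht.1, ht.2, min_le_right K r]
  calc ‖G' (lineMap x y t) (y - x)‖ ≤ ‖G' (lineMap x y t)‖ * ‖y - x‖ :=
        ContinuousLinearMap.le_opNorm _ _
    _ ≤ M * ‖y - x‖ := by gcongr
    _ < min K r := lt_min hK hr

theorem norm_image_sub_le_of_hasFDerivAt_bootstrap
    (hG : ∀ z ∈ segment ℝ x y, HasFDerivAt G (G' z) z)
    (hbound : ∀ z ∈ segment ℝ x y, ‖G z - G x‖ ≤ r → ‖G' z‖ ≤ M)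
    (hr : 0 < r) (hMr : M * ‖y - x‖ ≤ r) : ‖G y - G x‖ ≤ M * ‖y - x‖ := by
  have hshorter : ∀ s ∈ Ico (0 : ℝ) 1, ‖G (lineMap x y s) - G x‖ ≤ M * (s * ‖y - x‖) := by
    intro s hs
    have hsub : segment ℝ x (lineMap x y s) ⊆ segment ℝ x y :=
      (convex_segment x y).segment_subset (left_mem_segment ℝ x y)
        (lineMap_mem_segment ℝ x y (Ico_subset_Icc_self hs))
    have hnorm : ‖lineMap x y s - x‖ = s * ‖y - x‖ := by
      rw [← dist_eq_norm, dist_lineMap_left, Real.norm_of_nonneg hs.1, dist_comm, dist_eq_norm]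
    rw [← hnorm]
    refine norm_image_sub_le_of_hasFDerivAt_bootstrap_of_lt (fun z hz => hG z (hsub hz))
      (fun z hz => hbound z (hsub hz)) hr.le ?_
    rw [hnorm]
    nlinarith [hs.1, hs.2]
  have hlim : Tendsto (fun s : ℝ => G (lineMap x y s)) (𝓝[<] 1) (𝓝 (G y)) := by
    have hcont : ContinuousAt (fun s : ℝ => G (lineMap x y s)) 1 :=
      (hG y (right_mem_segment ℝ x y)).continuousAt.comp_of_eq hasDerivAt_lineMap.continuousAt
        (lineMap_apply_one x y)
    simpa using hcont.tendsto.mono_left nhdsWithin_le_nhds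
  have hbd : Tendsto (fun s : ℝ => M * (s * ‖y - x‖)) (𝓝[<] 1) (𝓝 (M * (1 * ‖y - x‖))) :=
    ((continuous_const.mul (continuous_id.mul continuous_const)).tendsto 1).mono_left
      nhdsWithin_le_nhds
  simpa using le_of_tendsto_of_tendsto ((hlim.sub_const (G x)).norm) hbd
    (mem_of_superset (Ico_mem_nhdsLT zero_lt_one) hshorter)

end Bootstrap

theorem grad_local_lipschitz_general (d : ℕ) (f : EuclideanSpace ℝ (Fin d) → ℝ)
    (ρ L₀ Lρ : ℝ) (hρ : 0 ≤ ρ) (hLρ : 0 ≤ Lρ)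
    (hf : ContDiff ℝ 2 f)
    (hhess : ∀ z, ‖fderiv ℝ (gradient f) z‖ ≤ L₀ + Lρ * ‖gradient f z‖ ^ ρ)
    (a : ℝ) (ha : 0 < a) (x y : EuclideanSpace ℝ (Fin d))
    (hxy : ‖y - x‖ ≤ a / (L₀ + Lρ * (‖gradient f x‖ + a) ^ ρ)) :
    ‖gradient f y - gradient f x‖ ≤ (L₀ + Lρ * (‖gradient f x‖ + a) ^ ρ) * ‖y - x‖ := by
  have hG : Differentiable ℝ (gradient f) :=
    (hf.gradient (m := 1) (by norm_num)).differentiable one_ne_zero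
  refine norm_image_sub_le_of_hasFDerivAt_bootstrap (fun z _ => (hG z).hasFDerivAt)
    (fun z _ hz => ?_) ha ?_
  · have hnorm : ‖gradient f z‖ ≤ ‖gradient f x‖ + a :=
      (norm_le_norm_add_norm_sub' _ _).trans (by gcongr)
    calc ‖fderiv ℝ (gradient f) z‖ ≤ L₀ + Lρ * ‖gradient f z‖ ^ ρ := hhess z
      _ ≤ L₀ + Lρ * (‖gradient f x‖ + a) ^ ρ := by gcongr
  · rcases le_or_gt (L₀ + Lρ * (‖gradient f x‖ + a) ^ ρ) 0 with hL | hL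
    · nlinarith [norm_nonneg (y - x)]
    · exact (le_div_iff₀' hL).mp hxy

/-- Under the `(L₀, L_ρ)` generalized smoothness condition, the gradient is
locally Lipschitz with constant `L₀ + L_ρ (‖∇f x‖ + a)^ρ` within radius
`a / (L₀ + L_ρ (‖∇f x‖ + a)^ρ)`. -/
theorem grad_local_lipschitz (d : ℕ) (f : EuclideanSpace ℝ (Fin d) → ℝ)
    (ρ L₀ Lρ : ℝ) (hρ : 0 ≤ ρ) (hL₀ : 0 ≤ L₀) (hLρ : 0 ≤ Lρ)
    (hf : ContDiff ℝ 2 f)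
    (hhess : ∀ z, ‖fderiv ℝ (gradient f) z‖ ≤ L₀ + Lρ * ‖gradient f z‖ ^ ρ)
    (a : ℝ) (ha : 0 < a) (x y : EuclideanSpace ℝ (Fin d))
    (hxy : ‖y - x‖ ≤ a / (L₀ + Lρ * (‖gradient f x‖ + a) ^ ρ)) :
    ‖gradient f y - gradient f x‖ ≤ (L₀ + Lρ * (‖gradient f x‖ + a) ^ ρ) * ‖y - x‖ :=
  grad_local_lipschitz_general d f ρ L₀ Lρ hρ hLρ hf hhess a ha x y hxy
end

section
/- For the double exponential function f(x) = a^{b^x} with a, b > 1 and any fixed ρ > 1, the limit as x → +∞ of |f'(x)|^ρ / |f''(x)| is +∞. Consequently, for any ρ with 1 < ρ < 2 there exist constants L₀, L_ρ ≥ 0 such that |f''(x)| ≤ L₀ + L_ρ|f'(x)|^ρ for all x ∈ ℝ. -/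
/-!
With `u = b ^ x` we have `f' = log a * log b * u * a ^ u` and `f'' = log b * (log a * u + 1) * f'`,
so `|f'| ^ ρ / |f''| = f' ^ (ρ - 1) / (log b * (log a * u + 1))`: an exponential in `u` over a
linear function of `u`, which tends to `∞`. Hence `|f''| ≤ |f'| ^ ρ` beyond some point `X`, and since
`|f''|` is monotone it is bounded by `|f'' X|` before `X`; this gives `L₀ = |f'' X|`, `L_ρ = 1`.
-/

open Real Filter

/-- In the variable `u = b ^ x`, with `β = log b`, this is `|f'| ^ ρ / |f''|`. -/
theorem tendsto_abs_rpow_div_abs_atTop {a β ρ : ℝ} (ha : 1 < a) (hβ : 0 < β) (hρ : 1 < ρ) :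
    Tendsto (fun u : ℝ => |log a * β * u * a ^ u| ^ ρ /
      |β * (log a * u + 1) * (log a * β * u * a ^ u)|) atTop atTop := by
  set α := log a
  have hα : 0 < α := log_pos ha
  have hc : 0 < (ρ - 1) * α := mul_pos (by linarith) hα
  have hK : 0 < (α * β) ^ (ρ - 1) / (β * (α + 1)) := by
    have : 0 < (α * β) ^ (ρ - 1) := rpow_pos_of_pos (mul_pos hα hβ) _
    positivity
  refine tendsto_atTop_mono' _ ?_
    ((tendsto_exp_mul_div_rpow_atTop 1 _ hc).const_mul_atTop hK)
  filter_upwards [eventually_ge_atTop 1] with u hu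
  have hau : a ^ u = exp (α * u) := rpow_def_of_pos (by linarith) u
  have hau_pos : 0 < a ^ u := by rw [hau]; positivity
  have hg : 0 < α * β * u * a ^ u := by positivity
  have hD : 0 < β * (α * u + 1) := by positivity
  have hsplit : (α * β * u * a ^ u) ^ ρ = (α * β * u * a ^ u) ^ (ρ - 1) * (α * β * u * a ^ u) := by
    rw [← rpow_add_one hg.ne', sub_add_cancel]
  have hnum : (α * β) ^ (ρ - 1) * exp ((ρ - 1) * α * u) ≤ (α * β * u * a ^ u) ^ (ρ - 1) :=
    calc (α * β) ^ (ρ - 1) * exp ((ρ - 1) * α * u)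
        = (α * β * a ^ u) ^ (ρ - 1) := by
          rw [hau, mul_rpow (by positivity) (exp_pos _).le, ← exp_mul]
          ring_nf
      _ ≤ (α * β * u * a ^ u) ^ (ρ - 1) := by
          refine rpow_le_rpow (by positivity) ?_ (by linarith)
          nlinarith [mul_pos (mul_pos hα hβ) hau_pos]
  have hden : β * (α * u + 1) ≤ β * (α + 1) * u := by nlinarith
  rw [abs_of_pos hg, abs_of_pos (mul_pos hD hg), hsplit, mul_div_mul_right _ _ hg.ne', rpow_one]
  calc (α * β) ^ (ρ - 1) / (β * (α + 1)) * (exp ((ρ - 1) * α * u) / u)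
      = (α * β) ^ (ρ - 1) * exp ((ρ - 1) * α * u) / (β * (α + 1) * u) := by
        rw [div_mul_div_comm]
    _ ≤ (α * β * u * a ^ u) ^ (ρ - 1) / (β * (α * u + 1)) :=
        div_le_div₀ (by positivity) hnum hD hden

theorem eventually_le_of_tendsto_div_atTop {ι : Type*} {l : Filter ι} {F G : ι → ℝ}
    (hF : ∀ᶠ x in l, 0 ≤ F x) (h : Tendsto (fun x => G x / F x) l atTop) :
    ∀ᶠ x in l, F x ≤ G x := by
  filter_upwards [hF, h.eventually_ge_atTop 1] with x hF0 hx
  rcases hF0.eq_or_lt with hzero | hpos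
  · rw [← hzero, div_zero] at hx
    linarith
  · simpa using (le_div_iff₀ hpos).mp hx

theorem exists_le_add_of_monotone_of_eventually_le {ι : Type*} [LinearOrder ι] [Nonempty ι]
    {F G : ι → ℝ} (hF : Monotone F) (hG : ∀ x, 0 ≤ G x) (h : ∀ᶠ x in atTop, F x ≤ G x) :
    ∃ L, 0 ≤ L ∧ ∀ x, F x ≤ L + G x := by
  obtain ⟨X, hX⟩ := h.exists_forall_of_atTop
  refine ⟨max (F X) 0, le_max_right _ _, fun x => ?_⟩
  rcases le_total x X with hx | hx
  · linarith [hF hx, le_max_left (F X) 0, hG x]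
  · linarith [hX x hx, le_max_right (F X) 0]

theorem monotone_abs_doubleExp_secondDeriv {a b : ℝ} (ha : 1 ≤ a) (hb : 1 ≤ b) :
    Monotone fun x : ℝ =>
      |log b * (log a * b ^ x + 1) * (log a * log b * b ^ x * a ^ (b ^ x))| := by
  have hα : 0 ≤ log a := log_nonneg ha
  have hβ : 0 ≤ log b := log_nonneg hb
  have ha0 : 0 < a := by linarith
  have hb0 : 0 < b := by linarith
  intro x y hxy
  have hbxy : b ^ x ≤ b ^ y := rpow_le_rpow_of_exponent_le hb hxy
  have habxy : a ^ (b ^ x) ≤ a ^ (b ^ y) := rpow_le_rpow_of_exponent_le ha hbxy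
  dsimp only
  rw [abs_of_nonneg (by positivity), abs_of_nonneg (by positivity)]
  gcongr

/-- For `f x = a^(b^x)` with `a, b > 1` and `ρ > 1`, `|f'|^ρ / |f''| → ∞` as
`x → ∞`; consequently for `1 < ρ < 2` the function is `(L₀,L_ρ)` smooth for
some `L₀, L_ρ ≥ 0`. Here `f' x = log a * log b * b^x * a^(b^x)` and
`f'' x = log b * (log a * b^x + 1) * f' x`. -/
theorem doubleExp_L0Lrho_smooth (a b : ℝ) (ha : 1 < a) (hb : 1 < b) (ρ : ℝ) (hρ : 1 < ρ) :
    Filter.Tendsto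
      (fun x : ℝ =>
        |Real.log a * Real.log b * b ^ x * a ^ (b ^ x)| ^ ρ /
          |Real.log b * (Real.log a * b ^ x + 1) *
            (Real.log a * Real.log b * b ^ x * a ^ (b ^ x))|)
      Filter.atTop Filter.atTop ∧
    (ρ < 2 → ∃ L₀ Lρ : ℝ, 0 ≤ L₀ ∧ 0 ≤ Lρ ∧ ∀ x : ℝ,
      |Real.log b * (Real.log a * b ^ x + 1) *
          (Real.log a * Real.log b * b ^ x * a ^ (b ^ x))| ≤
        L₀ + Lρ * |Real.log a * Real.log b * b ^ x * a ^ (b ^ x)| ^ ρ) := by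
  have hlim := (tendsto_abs_rpow_div_abs_atTop ha (log_pos hb) hρ).comp
    (tendsto_rpow_atTop_of_base_gt_one b hb)
  refine ⟨hlim, fun _ => ?_⟩
  obtain ⟨L₀, hL₀, hle⟩ := exists_le_add_of_monotone_of_eventually_le
    (monotone_abs_doubleExp_secondDeriv ha.le hb.le) (fun x => rpow_nonneg (abs_nonneg _) ρ)
    (eventually_le_of_tendsto_div_atTop (.of_forall fun x => abs_nonneg _) hlim)
  exact ⟨L₀, 1, hL₀, zero_le_one, fun x => by simpa using hle x⟩
end

section
/- Let β ∈ (0,1] and define α_t = β / (1 − (1−β)^t) for integers t ≥ 1. Then for all T ≥ 2, Σ_{t=2}^{T} α_t² ≤ 3(1 + β² T). -/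
/-!
Write `x = β t`. Since `(1 - β)^t ≤ e^{-x}` and, by the second-order Bonferroni bound,
`(1 - β)^t ≤ 1 - x + x²/2`, the denominator `1 - (1 - β)^t` is at least `x / 2` when `x ≤ 1` and
at least `1 - e⁻¹` when `x ≥ 1`. Hence each term is at most `4 / t² + 3 β²`, and
`∑_{t ≥ 2} 1 / t² ≤ 3 / 4` because `1 / t² ≤ 1 / (2 (t - 1)) - 1 / (2 (t + 1))` telescopes.
-/

open Finset Real

lemma one_sub_pow_le {β : ℝ} (hβ0 : 0 ≤ β) (hβ1 : β ≤ 1) (t : ℕ) :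
    (1 - β) ^ t ≤ 1 - t * β + (t * β) ^ 2 / 2 := by
  induction t with
  | zero => simp
  | succ n ih =>
    have h1β : 0 ≤ 1 - β := by linarith
    calc (1 - β) ^ (n + 1) = (1 - β) ^ n * (1 - β) := pow_succ _ _
      _ ≤ (1 - n * β + (n * β) ^ 2 / 2) * (1 - β) := mul_le_mul_of_nonneg_right ih h1β
      _ ≤ 1 - (n + 1 : ℕ) * β + ((n + 1 : ℕ) * β) ^ 2 / 2 := by
        push_cast
        nlinarith [mul_nonneg (sq_nonneg ((n : ℝ) * β)) hβ0, sq_nonneg β]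

lemma one_sub_pow_le_exp_neg {β : ℝ} (hβ : β ≤ 1) (t : ℕ) : (1 - β) ^ t ≤ exp (-(t * β)) := by
  rcases Nat.eq_zero_or_pos t with rfl | ht
  · simp
  · have ht' : (t : ℝ) ≠ 0 := by positivity
    simpa [mul_div_cancel_left₀ β ht'] using
      one_sub_div_pow_le_exp_neg (n := t) (t := t * β) (mul_le_of_le_one_right t.cast_nonneg hβ)

lemma sq_div_one_sub_one_sub_pow_le {β : ℝ} (hβ0 : 0 < β) (hβ1 : β ≤ 1) {t : ℕ} (ht : 0 < t) :
    (β / (1 - (1 - β) ^ t)) ^ 2 ≤ 4 / t ^ 2 + 3 * β ^ 2 := by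
  have htR : (0 : ℝ) < t := by exact_mod_cast ht
  rcases le_total (t * β) 1 with hsmall | hlarge
  · have hpos : 0 < t * β / 2 := half_pos (mul_pos htR hβ0)
    have hden : t * β / 2 ≤ 1 - (1 - β) ^ t := by
      nlinarith [one_sub_pow_le hβ0.le hβ1 t, mul_pos htR hβ0]
    have hα : β / (1 - (1 - β) ^ t) ≤ 2 / t := by
      calc β / (1 - (1 - β) ^ t) ≤ β / (t * β / 2) :=
            div_le_div_of_nonneg_left hβ0.le hpos hden
        _ = 2 / t := by field_simp
    calc (β / (1 - (1 - β) ^ t)) ^ 2 ≤ (2 / t) ^ 2 :=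
          pow_le_pow_left₀ (div_nonneg hβ0.le (hpos.trans_le hden).le) hα 2
      _ = 4 / t ^ 2 := by ring
      _ ≤ 4 / t ^ 2 + 3 * β ^ 2 := le_add_of_nonneg_right (by positivity)
  · have he : exp (-1) < 0.3678794412 := exp_neg_one_lt_d9
    have hden : 1 - exp (-1) ≤ 1 - (1 - β) ^ t := by
      have := one_sub_pow_le_exp_neg hβ1 t
      have := exp_le_exp.mpr (neg_le_neg hlarge)
      linarith
    have hα : β / (1 - (1 - β) ^ t) ≤ β / (1 - exp (-1)) :=
      div_le_div_of_nonneg_left hβ0.le (by linarith) hden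
    calc (β / (1 - (1 - β) ^ t)) ^ 2 ≤ (β / (1 - exp (-1))) ^ 2 :=
          pow_le_pow_left₀ (div_nonneg hβ0.le (by linarith)) hα 2
      _ ≤ 3 * β ^ 2 := by
        have hc : 1 / 3 ≤ (1 - exp (-1)) ^ 2 := by nlinarith
        rw [div_pow, div_le_iff₀ (by linarith)]
        nlinarith [mul_le_mul_of_nonneg_left hc (sq_nonneg β)]
      _ ≤ 4 / t ^ 2 + 3 * β ^ 2 := le_add_of_nonneg_left (by positivity)

lemma sum_Icc_two_inv_sq_le_sub {T : ℕ} (hT : 1 ≤ T) :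
    ∑ t ∈ Icc 2 T, 1 / (t : ℝ) ^ 2 ≤ 3 / 4 - 1 / (2 * (T : ℝ)) - 1 / (2 * (T + 1)) := by
  induction T, hT using Nat.le_induction with
  | base => norm_num
  | succ n hn ih =>
    rw [sum_Icc_succ_top (by omega), Nat.cast_succ]
    have hnR : (1 : ℝ) ≤ n := by exact_mod_cast hn
    have step : 1 / ((n : ℝ) + 1) ^ 2 ≤ 1 / (2 * n) - 1 / (2 * (n + 1 + 1)) := by
      rw [div_sub_div _ _ (by positivity) (by positivity), div_le_div_iff₀ (by positivity)
        (by positivity)]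
      nlinarith
    linarith

lemma sum_Icc_two_inv_sq_le (T : ℕ) : ∑ t ∈ Icc 2 T, 1 / (t : ℝ) ^ 2 ≤ 3 / 4 := by
  rcases Nat.eq_zero_or_pos T with rfl | hT
  · norm_num
  · have hTR : (1 : ℝ) ≤ T := by exact_mod_cast hT
    have := sum_Icc_two_inv_sq_le_sub hT
    have : 0 ≤ 1 / (2 * (T : ℝ)) + 1 / (2 * (T + 1)) := by positivity
    linarith

theorem sum_alpha_sq_le_general (β : ℝ) (hβ0 : 0 < β) (hβ1 : β ≤ 1) (T : ℕ) :
    ∑ t ∈ Finset.Icc 2 T, (β / (1 - (1 - β) ^ t)) ^ 2 ≤ 3 * (1 + β ^ 2 * T) := by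
  have hcard : ((Icc 2 T).card : ℝ) ≤ T := by
    rw [Nat.card_Icc]; exact_mod_cast (by omega : T + 1 - 2 ≤ T)
  calc ∑ t ∈ Icc 2 T, (β / (1 - (1 - β) ^ t)) ^ 2
      ≤ ∑ t ∈ Icc 2 T, (4 * (1 / (t : ℝ) ^ 2) + 3 * β ^ 2) := by
        refine sum_le_sum fun t ht ↦ ?_
        rw [mul_one_div]
        exact sq_div_one_sub_one_sub_pow_le hβ0 hβ1 (zero_lt_two.trans_le (mem_Icc.mp ht).1)
    _ = 4 * ∑ t ∈ Icc 2 T, 1 / (t : ℝ) ^ 2 + (Icc 2 T).card * (3 * β ^ 2) := by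
        rw [sum_add_distrib, ← mul_sum, sum_const, nsmul_eq_mul]
    _ ≤ 3 * (1 + β ^ 2 * T) := by
        nlinarith [sum_Icc_two_inv_sq_le T, mul_le_mul_of_nonneg_right hcard (sq_nonneg β)]

/-- Bound on the sum of squared re-scaled momentum coefficients:
`Σ_{t=2}^T (β / (1 - (1-β)^t))² ≤ 3 (1 + β² T)`. -/
theorem sum_alpha_sq_le (β : ℝ) (hβ0 : 0 < β) (hβ1 : β ≤ 1) (T : ℕ) (hT : 2 ≤ T) :
    ∑ t ∈ Finset.Icc 2 T, (β / (1 - (1 - β) ^ t)) ^ 2 ≤ 3 * (1 + β ^ 2 * T) :=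
  sum_alpha_sq_le_general β hβ0 hβ1 T
end
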